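/- The map z : x ↦ Z·x is a bijection from Λ onto Γ, and it conjugates F_C to F_S: for every x ∈ Λ, Z·(F_C(x)) = F_S(Z·x). -/
import Mathlib


/-- The continued fraction map `F_C` on `ℝ³` (defined on the nonnegative octant `Λ`). -/
noncomputable def FC (x : Fin 3 → ℝ) : Fin 3 → ℝ :=
  if x 2 ≤ x 0 then ![x 0 - x 2, x 2, x 1] else ![x 1, x 0, x 2 - x 0]

/-- The semi-sorted Selmer map `F_S` on `Γ`. -/
noncomputable def FS (x : Fin 3 → ℝ) : Fin 3 → ℝ :=
  if x 2 ≤ x 1 then ![x 1, x 0 - x 2, x 2] else ![x 2, x 1, x 0 - x 1]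

/-- The matrix `Z` with rows `(1,1,1), (1,1,0), (0,1,1)`. -/
def Zmat : Matrix (Fin 3) (Fin 3) ℝ := !![1, 1, 1; 1, 1, 0; 0, 1, 1]

/-- The cone `Λ = ℝ³₊`. -/
def LambdaSet : Set (Fin 3 → ℝ) := {x | ∀ i, 0 ≤ x i}

/-- The cone `Γ = {x ∈ ℝ³₊ : max(x₂,x₃) ≤ x₁ ≤ x₂ + x₃}`. -/
def GammaSet : Set (Fin 3 → ℝ) :=
  {x | (∀ i, 0 ≤ x i) ∧ max (x 1) (x 2) ≤ x 0 ∧ x 0 ≤ x 1 + x 2}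

lemma zm (x : Fin 3 → ℝ) :
    Zmat.mulVec x = ![x 0 + x 1 + x 2, x 0 + x 1, x 1 + x 2] := by
  funext i
  fin_cases i <;>
    simp [Zmat, Matrix.mulVec, dotProduct, Fin.sum_univ_three] <;> ring

theorem stmt16 :
    Set.BijOn Zmat.mulVec LambdaSet GammaSet ∧
    ∀ x ∈ LambdaSet, Zmat.mulVec (FC x) = FS (Zmat.mulVec x) := by
  constructor
  · refine ⟨?_, ?_, ?_⟩
    · intro x hx
      have h0 := hx 0; have h1 := hx 1; have h2 := hx 2
      rw [zm]
      refine ⟨?_, ?_, ?_⟩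
      · intro i; fin_cases i <;> simp <;> linarith
      · simp; constructor <;> linarith
      · simp; linarith
    · intro x _ y _ h
      rw [zm, zm] at h
      have h0 := congrFun h 0
      have h1 := congrFun h 1
      have h2 := congrFun h 2
      simp at h0 h1 h2
      funext i; fin_cases i <;> simp <;> linarith
    · intro y hy
      obtain ⟨hpos, hmax, hsum⟩ := hy
      have p0 := hpos 0; have p1 := hpos 1; have p2 := hpos 2
      rw [max_le_iff] at hmax
      refine ⟨![y 0 - y 2, y 1 + y 2 - y 0, y 0 - y 1], ?_, ?_⟩
      · intro i; fin_cases i <;> simp <;> linarith [hmax.1, hmax.2]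
      · rw [zm]; funext i; fin_cases i <;> simp <;> ring
  · intro x hx
    have h0 := hx 0; have h1 := hx 1; have h2 := hx 2
    rw [zm]
    unfold FC
    by_cases h : x 2 ≤ x 0
    · rw [if_pos h, zm]
      unfold FS
      rw [if_pos (by simp; linarith)]
      funext i; fin_cases i <;> simp <;> ring
    · rw [if_neg h, zm]
      unfold FS
      rw [if_neg (by simp; linarith)]
      funext i; fin_cases i <;> simp <;> ring
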